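/- Let C ⊆ ℝ be a closed set, let (W_n) be a sequence of P-variables such that W_n takes values in C almost everywhere for every n, and let W be a P-variable with d_M(W_n, W) → 0 as n → ∞. Then W takes values in C almost everywhere. -/

import Mathlib

set_option autoImplicit false

open MeasureTheory Set
open scoped ENNReal NNReal

noncomputable section

/-- `ℝ^n` with the Euclidean metric. -/
abbrev RE (n : ℕ) : Type := EuclideanSpace ℝ (Fin n)

/-- The random vector `(f₁(x₁), f₁(x₂), …, f_k(x₁), f_k(x₂), W(x₁,x₂,x₁₂))`. -/
def sVec {Ω₁ Ω₂ : Type*} (k : ℕ) (f : Fin k → Ω₁ → ℝ)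
    (W : Ω₁ × Ω₁ × Ω₂ → ℝ) (x : Ω₁ × Ω₁ × Ω₂) : RE (2 * k + 1) :=
  (WithLp.equiv 2 (Fin (2 * k + 1) → ℝ)).symm fun i =>
    if _ : (i : ℕ) < 2 * k then
      if (i : ℕ) % 2 = 0 then f ⟨(i : ℕ) / 2, by omega⟩ x.1
      else f ⟨(i : ℕ) / 2, by omega⟩ x.2.1
    else W x

/-- `S(f₁,…,f_k,W)`: the pushforward of the product measure `P₁ ⊗ P₁ ⊗ P₂` under `sVec`. -/
def Smeasure {Ω₁ Ω₂ : Type*} [MeasurableSpace Ω₁] [MeasurableSpace Ω₂]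
    (P₁ : Measure Ω₁) (P₂ : Measure Ω₂) {k : ℕ} (f : Fin k → Ω₁ → ℝ)
    (W : Ω₁ × Ω₁ × Ω₂ → ℝ) : Measure (RE (2 * k + 1)) :=
  (P₁.prod (P₁.prod P₂)).map (sVec k f W)

/-- The `k`-profile `S_k(W)`. -/
def SkSet {Ω₁ Ω₂ : Type*} [MeasurableSpace Ω₁] [MeasurableSpace Ω₂]
    (P₁ : Measure Ω₁) (P₂ : Measure Ω₂) (k : ℕ)
    (W : Ω₁ × Ω₁ × Ω₂ → ℝ) : Set (Measure (RE (2 * k + 1))) :=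
  {μ | ∃ f : Fin k → Ω₁ → ℝ, (∀ i, Measurable (f i)) ∧
    (∀ i x, f i x ∈ Icc (-1 : ℝ) 1) ∧ μ = Smeasure P₁ P₂ f W}

/-- A function partition: `{0,1}`-valued measurable functions summing to `1`. -/
def IsFunctionPartition {Ω₁ : Type*} [MeasurableSpace Ω₁] {k : ℕ}
    (f : Fin k → Ω₁ → ℝ) : Prop :=
  (∀ i, Measurable (f i)) ∧ (∀ i x, f i x = 0 ∨ f i x = 1) ∧ ∀ x, ∑ i, f i x = 1

/-- The restricted `k`-profile `S'_k(W)`. -/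
def SkSet' {Ω₁ Ω₂ : Type*} [MeasurableSpace Ω₁] [MeasurableSpace Ω₂]
    (P₁ : Measure Ω₁) (P₂ : Measure Ω₂) (k : ℕ)
    (W : Ω₁ × Ω₁ × Ω₂ → ℝ) : Set (Measure (RE (2 * k + 1))) :=
  {μ | ∃ f : Fin k → Ω₁ → ℝ, IsFunctionPartition f ∧ μ = Smeasure P₁ P₂ f W}

/-- Hausdorff edistance (w.r.t. the Lévy–Prokhorov distance) between sets of measures. -/
def eHausLP {X : Type*} [MeasurableSpace X] [PseudoEMetricSpace X]
    (A B : Set (Measure X)) : ℝ≥0∞ :=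
  max (⨆ μ ∈ A, ⨅ ν ∈ B, levyProkhorovEDist μ ν)
      (⨆ ν ∈ B, ⨅ μ ∈ A, levyProkhorovEDist μ ν)

/-- Hausdorff distance (w.r.t. the Lévy–Prokhorov distance) between sets of measures. -/
def dHLP {X : Type*} [MeasurableSpace X] [PseudoEMetricSpace X]
    (A B : Set (Measure X)) : ℝ := (eHausLP A B).toReal

/-- A `P`-variable: a measurable real-valued function on a product `Ω₁ × Ω₁ × Ω₂`
of probability spaces. -/
structure PVar where
  (Ω₁ : Type*)
  (Ω₂ : Type*)
  [m₁ : MeasurableSpace Ω₁]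
  [m₂ : MeasurableSpace Ω₂]
  (P₁ : Measure Ω₁)
  (P₂ : Measure Ω₂)
  (prob₁ : IsProbabilityMeasure P₁)
  (prob₂ : IsProbabilityMeasure P₂)
  (W : Ω₁ × Ω₁ × Ω₂ → ℝ)
  (meas : Measurable W)

attribute [instance] PVar.m₁ PVar.m₂

/-- The underlying product probability measure of a `P`-variable. -/
def PVar.vol (V : PVar) : Measure (V.Ω₁ × V.Ω₁ × V.Ω₂) := V.P₁.prod (V.P₁.prod V.P₂)

/-- The `k`-profile of a `P`-variable. -/
def PVar.Sk (V : PVar) (k : ℕ) : Set (Measure (RE (2 * k + 1))) := SkSet V.P₁ V.P₂ k V.W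

/-- The restricted `k`-profile of a `P`-variable. -/
def PVar.Sk' (V : PVar) (k : ℕ) : Set (Measure (RE (2 * k + 1))) := SkSet' V.P₁ V.P₂ k V.W

/-- The `P`-variables metric `d_M`. -/
def dM (V U : PVar) : ℝ :=
  ∑' k : ℕ, (2 : ℝ)⁻¹ ^ (k + 1) * dHLP (V.Sk (k + 1)) (U.Sk (k + 1))

universe u₁ u₂ u₃ u₄

/-!
Any `μ ∈ S₁(W)` is the law of a vector whose last coordinate is `W`. Since `d_H(S₁(W_n), S₁(W)) ≤
2 d_M(W_n, W) → 0`, there are `ρ_n ∈ S₁(W_n)` with `d_LP(ρ_n, μ) → 0`, and each `ρ_n` is carried by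
the closed set `{y | y_last ∈ C}` because `W_n ∈ C` a.e. Being carried by a closed set passes to
Lévy–Prokhorov limits, so `μ` is carried by it as well, i.e. `W ∈ C` a.e.
-/

/-- Test the distance on the sets `{x | δ < infEDist x F}`, whose `δ`-thickenings avoid `F`. -/
theorem measure_compl_eq_zero_of_forall_levyProkhorovEDist_lt {X : Type*} [MeasurableSpace X]
    [PseudoEMetricSpace X] [OpensMeasurableSpace X] {F : Set X} (hF : IsClosed F)
    {μ : Measure X} (h : ∀ ε > 0, ∃ ρ : Measure X, ρ Fᶜ = 0 ∧ levyProkhorovEDist ρ μ < ε) :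
    μ Fᶜ = 0 := by
  have hfar : ∀ δ : ℝ≥0∞, δ ≠ 0 → μ {x | δ < Metric.infEDist x F} = 0 := by
    intro δ hδ
    set G := {x | δ < Metric.infEDist x F}
    refine le_antisymm (ENNReal.le_of_forall_pos_le_add fun ε hε _ => ?_) bot_le
    set c : ℝ≥0∞ := min ε δ
    have hc : 0 < c := lt_min (by exact_mod_cast hε) (pos_iff_ne_zero.2 hδ)
    have hc_top : c ≠ ⊤ := (min_le_left _ _).trans_lt ENNReal.coe_lt_top |>.ne
    obtain ⟨ρ, hρF, hρμ⟩ := h c hc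
    have hthick : Metric.thickening c.toReal G ⊆ Fᶜ := by
      intro y hy hyF
      obtain ⟨z, hzG, hzy⟩ := (Metric.mem_thickening_iff_exists_edist_lt _ _).1 hy
      rw [ENNReal.ofReal_toReal hc_top] at hzy
      have : Metric.infEDist z F < δ :=
        (Metric.infEDist_le_edist_of_mem hyF).trans_lt
          ((edist_comm z y).trans_lt (hzy.trans_le (min_le_right _ _)))
      exact lt_asymm hzG this
    have hG : MeasurableSet G :=
      measurableSet_lt measurable_const Metric.continuous_infEDist.measurable
    calc μ G ≤ ρ (Metric.thickening c.toReal G) + c :=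
          right_measure_le_of_levyProkhorovEDist_lt hρμ hG
      _ ≤ ρ Fᶜ + ε := by gcongr; exact min_le_left _ _
      _ = 0 + ε := by rw [hρF]
  have hcover : Fᶜ ⊆ ⋃ n : ℕ, {x | (n : ℝ≥0∞)⁻¹ < Metric.infEDist x F} := by
    intro x hx
    have : Metric.infEDist x F ≠ 0 := by
      rwa [Ne, ← Metric.mem_closure_iff_infEDist_zero, hF.closure_eq]
    simpa using ENNReal.exists_inv_nat_lt this
  exact measure_mono_null hcover (measure_iUnion_null fun n =>
    hfar _ (ENNReal.inv_ne_zero.2 (ENNReal.natCast_ne_top n)))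

theorem levyProkhorovEDist_le_one {X : Type*} [MeasurableSpace X] [PseudoEMetricSpace X]
    (μ ν : Measure X) [IsProbabilityMeasure μ] [IsProbabilityMeasure ν] :
    levyProkhorovEDist μ ν ≤ 1 :=
  (levyProkhorovEDist_le_max_measure_univ μ ν).trans (by simp)

section HausdorffLP

variable {X : Type*} [MeasurableSpace X] [PseudoEMetricSpace X] {A B : Set (Measure X)}

theorem eHausLP_le_one (hA : ∀ μ ∈ A, IsProbabilityMeasure μ)
    (hB : ∀ ν ∈ B, IsProbabilityMeasure ν) (hA₀ : A.Nonempty) (hB₀ : B.Nonempty) :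
    eHausLP A B ≤ 1 := by
  obtain ⟨μ₀, hμ₀⟩ := hA₀
  obtain ⟨ν₀, hν₀⟩ := hB₀
  have := hA μ₀ hμ₀
  have := hB ν₀ hν₀
  refine max_le (iSup₂_le fun μ hμ => ?_) (iSup₂_le fun ν hν => ?_)
  · have := hA μ hμ
    exact (iInf₂_le ν₀ hν₀).trans (levyProkhorovEDist_le_one _ _)
  · have := hB ν hν
    exact (iInf₂_le μ₀ hμ₀).trans (levyProkhorovEDist_le_one _ _)

theorem exists_levyProkhorovEDist_lt_of_eHausLP_lt {ε : ℝ≥0∞} (h : eHausLP A B < ε)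
    {μ : Measure X} (hμ : μ ∈ B) : ∃ ρ ∈ A, levyProkhorovEDist ρ μ < ε := by
  have : ⨅ ρ ∈ A, levyProkhorovEDist ρ μ < ε :=
    ((le_iSup₂ (f := fun ν _ => ⨅ ρ ∈ A, levyProkhorovEDist ρ ν) μ hμ).trans
      (le_max_right _ _)).trans_lt h
  simpa only [iInf_lt_iff, exists_prop] using this

end HausdorffLP

theorem measurable_sVec {Ω₁ Ω₂ : Type*} [MeasurableSpace Ω₁] [MeasurableSpace Ω₂]
    {k : ℕ} {f : Fin k → Ω₁ → ℝ} (hf : ∀ i, Measurable (f i))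
    {W : Ω₁ × Ω₁ × Ω₂ → ℝ} (hW : Measurable W) : Measurable (sVec k f W) := by
  refine (MeasurableEquiv.toLp 2 _).measurable.comp (measurable_pi_lambda _ fun i => ?_)
  split_ifs
  · exact (hf _).comp measurable_fst
  · exact (hf _).comp (measurable_fst.comp measurable_snd)
  · exact hW

theorem sVec_last {Ω₁ Ω₂ : Type*} (k : ℕ) (f : Fin k → Ω₁ → ℝ) (W : Ω₁ × Ω₁ × Ω₂ → ℝ)
    (x : Ω₁ × Ω₁ × Ω₂) : sVec k f W x (Fin.last (2 * k)) = W x := by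
  simp [sVec]

theorem Smeasure_preimage_last {Ω₁ Ω₂ : Type*} [MeasurableSpace Ω₁] [MeasurableSpace Ω₂]
    (P₁ : Measure Ω₁) (P₂ : Measure Ω₂) {k : ℕ} {f : Fin k → Ω₁ → ℝ}
    (hf : ∀ i, Measurable (f i)) {W : Ω₁ × Ω₁ × Ω₂ → ℝ} (hW : Measurable W)
    {s : Set ℝ} (hs : MeasurableSet s) :
    Smeasure P₁ P₂ f W ((fun y : RE (2 * k + 1) => y (Fin.last (2 * k))) ⁻¹' s) =
      P₁.prod (P₁.prod P₂) (W ⁻¹' s) := by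
  have hlast : Continuous fun y : RE (2 * k + 1) => y (Fin.last (2 * k)) := by fun_prop
  rw [Smeasure, Measure.map_apply (measurable_sVec hf hW) (hs.preimage hlast.measurable)]
  simp only [← preimage_comp, Function.comp_def, sVec_last]

namespace PVar

theorem Sk_nonempty (V : PVar) (k : ℕ) : (V.Sk k).Nonempty :=
  ⟨_, fun _ _ => 0, fun _ => measurable_const, fun _ _ => by norm_num, rfl⟩

theorem isProbabilityMeasure_of_mem_Sk (V : PVar) {k : ℕ} {μ : Measure (RE (2 * k + 1))}
    (hμ : μ ∈ V.Sk k) : IsProbabilityMeasure μ := by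
  have := V.prob₁
  have := V.prob₂
  obtain ⟨f, hf, -, rfl⟩ := hμ
  exact Measure.isProbabilityMeasure_map (measurable_sVec hf V.meas).aemeasurable

theorem measure_preimage_last_of_mem_Sk {V : PVar} {k : ℕ} {ρ : Measure (RE (2 * k + 1))}
    (hρ : ρ ∈ V.Sk k) {s : Set ℝ} (hs : MeasurableSet s) :
    ρ ((fun y : RE (2 * k + 1) => y (Fin.last (2 * k))) ⁻¹' s) = V.vol (V.W ⁻¹' s) := by
  obtain ⟨f, hf, -, rfl⟩ := hρ
  exact Smeasure_preimage_last _ _ hf V.meas hs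

theorem eHausLP_Sk_le_one (V U : PVar) (k : ℕ) : eHausLP (V.Sk k) (U.Sk k) ≤ 1 :=
  eHausLP_le_one (fun _ => V.isProbabilityMeasure_of_mem_Sk)
    (fun _ => U.isProbabilityMeasure_of_mem_Sk) (V.Sk_nonempty k) (U.Sk_nonempty k)

theorem dHLP_Sk_le_one (V U : PVar) (k : ℕ) : dHLP (V.Sk k) (U.Sk k) ≤ 1 :=
  (ENNReal.toReal_mono ENNReal.one_ne_top (eHausLP_Sk_le_one V U k)).trans_eq ENNReal.toReal_one

theorem dHLP_Sk_one_le_two_mul_dM (V U : PVar) : dHLP (V.Sk 1) (U.Sk 1) ≤ 2 * dM V U := by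
  have hnonneg : ∀ k : ℕ, 0 ≤ (2 : ℝ)⁻¹ ^ (k + 1) * dHLP (V.Sk (k + 1)) (U.Sk (k + 1)) :=
    fun k => mul_nonneg (by positivity) ENNReal.toReal_nonneg
  have hsum : Summable fun k : ℕ => (2 : ℝ)⁻¹ ^ (k + 1) * dHLP (V.Sk (k + 1)) (U.Sk (k + 1)) :=
    .of_nonneg_of_le hnonneg
      (fun k => mul_le_of_le_one_right (by positivity) (dHLP_Sk_le_one V U (k + 1)))
      ((summable_geometric_two).comp_injective (add_left_injective 1) |>.congr fun k => by
        simp [one_div])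
  have hfirst : (2 : ℝ)⁻¹ * dHLP (V.Sk 1) (U.Sk 1) ≤ dM V U := by
    simpa [dM] using hsum.le_tsum 0 fun j _ => hnonneg j
  linarith

theorem tendsto_eHausLP_Sk_one {ι : Type*} {l : Filter ι} (V : ι → PVar) (U : PVar)
    (h : Filter.Tendsto (fun i => dM (V i) U) l (nhds 0)) :
    Filter.Tendsto (fun i => eHausLP ((V i).Sk 1) (U.Sk 1)) l (nhds 0) := by
  have hd : Filter.Tendsto (fun i => dHLP ((V i).Sk 1) (U.Sk 1)) l (nhds 0) := by
    refine squeeze_zero (fun _ => ENNReal.toReal_nonneg)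
      (fun i => dHLP_Sk_one_le_two_mul_dM (V i) U) ?_
    simpa using h.const_mul 2
  have hfin : ∀ i, eHausLP ((V i).Sk 1) (U.Sk 1) ≠ ⊤ :=
    fun i => ((eHausLP_Sk_le_one _ _ 1).trans_lt ENNReal.one_lt_top).ne
  simpa [dHLP, ENNReal.ofReal_toReal (hfin _)] using ENNReal.tendsto_ofReal hd

end PVar

/-- If `C ⊆ ℝ` is closed, each P-variable `W_n` takes values in `C`
almost everywhere, and `d_M(W_n, W) → 0`, then `W` takes values in `C` almost
everywhere. -/
theorem ae_mem_closed_of_dM_tendsto_zero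
    (C : Set ℝ) (hC : IsClosed C)
    (V : ℕ → PVar.{u₁, u₂}) (Vlim : PVar.{u₃, u₄})
    (hvals : ∀ n, (V n).vol {x | (V n).W x ∉ C} = 0)
    (hconv : Filter.Tendsto (fun n => dM (V n) Vlim) Filter.atTop (nhds 0)) :
    Vlim.vol {x | Vlim.W x ∉ C} = 0 := by
  obtain ⟨μ, hμ⟩ := Vlim.Sk_nonempty 1
  have hlast : Continuous fun y : RE (2 * 1 + 1) => y (Fin.last (2 * 1)) := by fun_prop
  change Vlim.vol (Vlim.W ⁻¹' Cᶜ) = 0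
  rw [← PVar.measure_preimage_last_of_mem_Sk hμ hC.measurableSet.compl, preimage_compl]
  refine measure_compl_eq_zero_of_forall_levyProkhorovEDist_lt (hC.preimage hlast) fun ε hε => ?_
  obtain ⟨n, hn⟩ := ((PVar.tendsto_eHausLP_Sk_one V Vlim hconv).eventually (gt_mem_nhds hε)).exists
  obtain ⟨ρ, hρ, hρμ⟩ := exists_levyProkhorovEDist_lt_of_eHausLP_lt hn hμ
  refine ⟨ρ, ?_, hρμ⟩
  rw [← preimage_compl, PVar.measure_preimage_last_of_mem_Sk hρ hC.measurableSet.compl]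
  exact hvals n

end
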